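/- Structure of optimal relay beamformers (Lemma 2): Assume u_i ≠ 0 for all i. Then the supremum, over all feasible tuples (B_1,…,B_R), of inf_{Δf∈A} SNR({B_i},{f̃_i+Δf_i}) equals the supremum, over all tuples (b_1,…,b_R) with b_i ∈ ℂ^{M_i} and ‖b_i‖₂ ≤ √(P_i/(σ_R²+‖u_i‖₂²)), of inf_{Δf∈A} |∑_{i=1}^R (f̃_i+Δf_i)ᵀ b_i ‖u_i‖₂|² / (σ_R² ∑_{i=1}^R |(f̃_i+Δf_i)ᵀ b_i|² + σ_D²). In particular, for every such (b_1,…,b_R) the matrices B_i = b_i (u_i/‖u_i‖₂)ᴴ are feasible and achieve the same worst-case SNR as the reduced expression. -/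

import Mathlib

noncomputable section

/-- Euclidean (ℓ²) norm of a complex vector. -/
def vnorm2 {n : ℕ} (v : Fin n → ℂ) : ℝ := Real.sqrt (∑ j, ‖v j‖ ^ 2)

/-- Received SNR of the two-hop AF relay network for relay BF matrices `B`
and second-hop channels `f`. -/
def SNRval (R : ℕ) (M : Fin R → ℕ) (σR2 σD2 : ℝ)
    (u : (i : Fin R) → Fin (M i) → ℂ)
    (B : (i : Fin R) → Matrix (Fin (M i)) (Fin (M i)) ℂ)
    (f : (i : Fin R) → Fin (M i) → ℂ) : ℝ :=
  ‖∑ i, ∑ j, ∑ k, f i j * B i j k * u i k‖ ^ 2 /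
    (σD2 + σR2 * ∑ i, ∑ k, ‖∑ j, B i j k * f i j‖ ^ 2)

/-- Feasibility: per-relay power constraints `‖B_i u_i‖² + σ_R² tr(B_iᴴ B_i) ≤ P_i`. -/
def FeasibleB (R : ℕ) (M : Fin R → ℕ) (σR2 : ℝ) (P : Fin R → ℝ)
    (u : (i : Fin R) → Fin (M i) → ℂ)
    (B : (i : Fin R) → Matrix (Fin (M i)) (Fin (M i)) ℂ) : Prop :=
  ∀ i, (∑ j, ‖∑ k, B i j k * u i k‖ ^ 2) + σR2 * ∑ j, ∑ k, ‖B i j k‖ ^ 2 ≤ P i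

/-- Worst-case SNR over the uncertainty set `A = {Δf : ‖Δf_i‖₂ ≤ ε_i}`. -/
def WorstSNR (R : ℕ) (M : Fin R → ℕ) (σR2 σD2 : ℝ)
    (u : (i : Fin R) → Fin (M i) → ℂ)
    (ftil : (i : Fin R) → Fin (M i) → ℂ) (ε : Fin R → ℝ)
    (B : (i : Fin R) → Matrix (Fin (M i)) (Fin (M i)) ℂ) : ℝ :=
  sInf {s : ℝ | ∃ Δf : (i : Fin R) → Fin (M i) → ℂ,
    (∀ i, vnorm2 (Δf i) ≤ ε i) ∧
    s = SNRval R M σR2 σD2 u B (fun i => ftil i + Δf i)}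

/-- Worst-case value of the reduced SNR expression of Lemma 2, for relay BF
vectors `b_i`. -/
def RedWorst (R : ℕ) (M : Fin R → ℕ) (σR2 σD2 : ℝ)
    (u : (i : Fin R) → Fin (M i) → ℂ)
    (ftil : (i : Fin R) → Fin (M i) → ℂ) (ε : Fin R → ℝ)
    (b : (i : Fin R) → Fin (M i) → ℂ) : ℝ :=
  sInf {s : ℝ | ∃ Δf : (i : Fin R) → Fin (M i) → ℂ,
    (∀ i, vnorm2 (Δf i) ≤ ε i) ∧
    s = ‖∑ i, (∑ j, (ftil i j + Δf i j) * b i j) * (vnorm2 (u i) : ℂ)‖ ^ 2 /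
          (σR2 * ∑ i, ‖∑ j, (ftil i j + Δf i j) * b i j‖ ^ 2 + σD2)}

/-!
For a feasible `B_i`, the compressed vector `b_i = B_i u_i / ‖u_i‖` leaves the signal term
`fᵀ B_i u_i = (fᵀ b_i) ‖u_i‖` unchanged, while Cauchy–Schwarz against `u_i / ‖u_i‖` gives
`|fᵀ b_i|² ≤ ‖B_iᵀ f‖²` (the noise term only decreases) and `‖B_i u_i‖² ≤ ‖B_i‖_F² ‖u_i‖²`
(so `b_i` satisfies the reduced power budget). Hence every feasible `B` is dominated, for every
channel realisation, by the reduced expression at `b`; conversely the rank-one beamformer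
`b_i (u_i / ‖u_i‖)ᴴ` turns both inequalities into equalities.
-/

open Finset

lemma norm_sum_mul_sq_le {ι : Type*} [Fintype ι] (v w : ι → ℂ) :
    ‖∑ j, v j * w j‖ ^ 2 ≤ (∑ j, ‖v j‖ ^ 2) * ∑ j, ‖w j‖ ^ 2 :=
  calc ‖∑ j, v j * w j‖ ^ 2 ≤ (∑ j, ‖v j‖ * ‖w j‖) ^ 2 := by
        gcongr
        exact (norm_sum_le _ _).trans_eq (by simp only [norm_mul])
    _ ≤ _ := sum_mul_sq_le_sq_mul_sq _ _ _

lemma sum_sum_mul_mul_eq_of_sum_mul_eq {ι : Type*} [Fintype ι] {B : ι → ι → ℂ} {u c f : ι → ℂ}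
    {a : ℂ} (h : ∀ j, ∑ k, B j k * u k = c j * a) :
    ∑ j, ∑ k, f j * B j k * u k = (∑ j, f j * c j) * a := by
  rw [sum_mul]
  refine sum_congr rfl fun j _ => ?_
  simp only [mul_assoc, ← mul_sum, h]

section Vector

variable {n : ℕ}

lemma vnorm2_nonneg (v : Fin n → ℂ) : 0 ≤ vnorm2 v := Real.sqrt_nonneg _

lemma vnorm2_sq (v : Fin n → ℂ) : vnorm2 v ^ 2 = ∑ j, ‖v j‖ ^ 2 :=
  Real.sq_sqrt (by positivity)

lemma vnorm2_pos {v : Fin n → ℂ} (hv : v ≠ 0) : 0 < vnorm2 v := by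
  obtain ⟨j, hj⟩ := Function.ne_iff.1 hv
  exact Real.sqrt_pos.2 <| sum_pos' (fun k _ => by positivity)
    ⟨j, mem_univ j, by have := norm_pos_iff.2 hj; positivity⟩

lemma norm_ofReal_vnorm2 (v : Fin n → ℂ) : ‖(vnorm2 v : ℂ)‖ = vnorm2 v := by
  rw [Complex.norm_real, Real.norm_of_nonneg (vnorm2_nonneg v)]

lemma vnorm2_le_sqrt_div_iff {v : Fin n → ℂ} {P c : ℝ} (hP : 0 ≤ P) (hc : 0 < c) :
    vnorm2 v ≤ √(P / c) ↔ c * ∑ j, ‖v j‖ ^ 2 ≤ P := by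
  rw [Real.le_sqrt (vnorm2_nonneg v) (by positivity), vnorm2_sq, le_div_iff₀ hc, mul_comm]

lemma vnorm2_zero : vnorm2 (0 : Fin n → ℂ) = 0 := by simp [vnorm2]

lemma sum_norm_conj_div_vnorm2_sq {u : Fin n → ℂ} (hu : u ≠ 0) :
    ∑ k, ‖starRingEnd ℂ (u k) / (vnorm2 u : ℂ)‖ ^ 2 = 1 := by
  simp only [norm_div, norm_ofReal_vnorm2, RCLike.norm_conj, div_pow]
  rw [← sum_div, ← vnorm2_sq, div_self (by have := vnorm2_pos hu; positivity)]

lemma sum_conj_div_vnorm2_mul {u : Fin n → ℂ} (hu : u ≠ 0) :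
    ∑ k, starRingEnd ℂ (u k) / (vnorm2 u : ℂ) * u k = vnorm2 u := by
  have hpos : (vnorm2 u : ℂ) ≠ 0 := by exact_mod_cast (vnorm2_pos hu).ne'
  have hsq : ∑ k, starRingEnd ℂ (u k) * u k = (vnorm2 u : ℂ) ^ 2 := by
    simp only [RCLike.conj_mul]
    rw [← Complex.ofReal_pow, vnorm2_sq]
    push_cast
    rfl
  simp only [div_mul_eq_mul_div, ← sum_div, hsq]
  field_simp

def rankOneBF (b u : Fin n → ℂ) : Matrix (Fin n) (Fin n) ℂ :=
  fun j k => b j * (starRingEnd ℂ (u k) / (vnorm2 u : ℂ))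

def compressBF (B : Matrix (Fin n) (Fin n) ℂ) (u : Fin n → ℂ) : Fin n → ℂ :=
  fun j => (∑ k, B j k * u k) / (vnorm2 u : ℂ)

variable {u : Fin n → ℂ}

lemma sum_rankOneBF_mul (hu : u ≠ 0) (b : Fin n → ℂ) (j : Fin n) :
    ∑ k, rankOneBF b u j k * u k = b j * vnorm2 u := by
  simp only [rankOneBF, mul_assoc, ← mul_sum, sum_conj_div_vnorm2_mul hu]

lemma sum_norm_sum_rankOneBF_mul_sq (hu : u ≠ 0) (b f : Fin n → ℂ) :
    ∑ k, ‖∑ j, rankOneBF b u j k * f j‖ ^ 2 = ‖∑ j, f j * b j‖ ^ 2 := by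
  have hcol : ∀ k, ∑ j, rankOneBF b u j k * f j
      = starRingEnd ℂ (u k) / (vnorm2 u : ℂ) * ∑ j, f j * b j := fun k => by
    rw [mul_sum]
    exact sum_congr rfl fun j _ => by simp only [rankOneBF]; ring
  simp only [hcol, norm_mul, mul_pow, ← sum_mul, sum_norm_conj_div_vnorm2_sq hu, one_mul]

lemma sum_sum_norm_rankOneBF_sq (hu : u ≠ 0) (b : Fin n → ℂ) :
    ∑ j, ∑ k, ‖rankOneBF b u j k‖ ^ 2 = ∑ j, ‖b j‖ ^ 2 := by
  simp only [rankOneBF, norm_mul, mul_pow, ← mul_sum, sum_norm_conj_div_vnorm2_sq hu, mul_one]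

lemma relayPower_rankOneBF (hu : u ≠ 0) (σ : ℝ) (b : Fin n → ℂ) :
    ∑ j, ‖∑ k, rankOneBF b u j k * u k‖ ^ 2 + σ * ∑ j, ∑ k, ‖rankOneBF b u j k‖ ^ 2
      = (σ + vnorm2 u ^ 2) * ∑ j, ‖b j‖ ^ 2 := by
  simp only [sum_rankOneBF_mul hu, sum_sum_norm_rankOneBF_sq hu, norm_mul, norm_ofReal_vnorm2,
    mul_pow, ← sum_mul]
  ring

lemma sum_compressBF_mul (hu : u ≠ 0) (B : Matrix (Fin n) (Fin n) ℂ) (j : Fin n) :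
    ∑ k, B j k * u k = compressBF B u j * vnorm2 u := by
  rw [compressBF, div_mul_cancel₀ _ (by exact_mod_cast (vnorm2_pos hu).ne')]

lemma norm_sum_mul_compressBF_sq_le (hu : u ≠ 0) (B : Matrix (Fin n) (Fin n) ℂ)
    (f : Fin n → ℂ) :
    ‖∑ j, f j * compressBF B u j‖ ^ 2 ≤ ∑ k, ‖∑ j, B j k * f j‖ ^ 2 := by
  have hpos := vnorm2_pos hu
  have hsum : ∑ j, f j * compressBF B u j = (∑ k, (∑ j, B j k * f j) * u k) / (vnorm2 u : ℂ) := by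
    simp only [compressBF, mul_div_assoc', ← sum_div, mul_sum, sum_mul]
    rw [sum_comm]
    exact congrArg (· / _) (sum_congr rfl fun j _ => sum_congr rfl fun k _ => by ring)
  rw [hsum, norm_div, norm_ofReal_vnorm2, div_pow, div_le_iff₀ (by positivity), vnorm2_sq]
  exact norm_sum_mul_sq_le _ _

lemma relayPower_compressBF_le (hu : u ≠ 0) {σ : ℝ} (hσ : 0 ≤ σ)
    (B : Matrix (Fin n) (Fin n) ℂ) :
    (σ + vnorm2 u ^ 2) * ∑ j, ‖compressBF B u j‖ ^ 2
      ≤ ∑ j, ‖∑ k, B j k * u k‖ ^ 2 + σ * ∑ j, ∑ k, ‖B j k‖ ^ 2 := by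
  have hpos : 0 < vnorm2 u ^ 2 := by have := vnorm2_pos hu; positivity
  have hb : ∑ j, ‖compressBF B u j‖ ^ 2 * vnorm2 u ^ 2 = ∑ j, ‖∑ k, B j k * u k‖ ^ 2 := by
    simp only [sum_compressBF_mul hu B, norm_mul, norm_ofReal_vnorm2, mul_pow]
  have hCS : ∑ j, ‖∑ k, B j k * u k‖ ^ 2 ≤ (∑ j, ∑ k, ‖B j k‖ ^ 2) * vnorm2 u ^ 2 := by
    rw [sum_mul, vnorm2_sq]
    exact sum_le_sum fun j _ => norm_sum_mul_sq_le _ _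
  rw [← sum_mul] at hb
  nlinarith [mul_le_mul_of_nonneg_left hCS hσ]

end Vector

lemma sInf_setOf_le_sInf_setOf {α : Type*} {p : α → Prop} {g h : α → ℝ} (hp : ∃ x, p x)
    (hg : BddBelow {s | ∃ x, p x ∧ s = g x}) (hgh : ∀ x, p x → g x ≤ h x) :
    sInf {s | ∃ x, p x ∧ s = g x} ≤ sInf {s | ∃ x, p x ∧ s = h x} := by
  obtain ⟨x, hx⟩ := hp
  refine le_csInf ⟨h x, x, hx, rfl⟩ ?_
  rintro _ ⟨y, hy, rfl⟩
  exact (csInf_le hg ⟨y, hy, rfl⟩).trans (hgh y hy)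

section Network

variable {R : ℕ} {M : Fin R → ℕ} {σR2 σD2 : ℝ} {u : (i : Fin R) → Fin (M i) → ℂ}

def reducedSNR (R : ℕ) (M : Fin R → ℕ) (σR2 σD2 : ℝ) (u b f : (i : Fin R) → Fin (M i) → ℂ) :
    ℝ :=
  ‖∑ i, (∑ j, f i j * b i j) * (vnorm2 (u i) : ℂ)‖ ^ 2 /
    (σR2 * ∑ i, ‖∑ j, f i j * b i j‖ ^ 2 + σD2)

lemma redWorst_eq_sInf_reducedSNR (ftil : (i : Fin R) → Fin (M i) → ℂ) (ε : Fin R → ℝ)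
    (b : (i : Fin R) → Fin (M i) → ℂ) :
    RedWorst R M σR2 σD2 u ftil ε b = sInf {s : ℝ | ∃ Δf : (i : Fin R) → Fin (M i) → ℂ,
      (∀ i, vnorm2 (Δf i) ≤ ε i) ∧ s = reducedSNR R M σR2 σD2 u b (fun i => ftil i + Δf i)} :=
  rfl

lemma SNRval_nonneg (hσR : 0 ≤ σR2) (hσD : 0 ≤ σD2)
    (B : (i : Fin R) → Matrix (Fin (M i)) (Fin (M i)) ℂ) (f : (i : Fin R) → Fin (M i) → ℂ) :
    0 ≤ SNRval R M σR2 σD2 u B f := by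
  unfold SNRval
  positivity

lemma SNRval_rankOneBF (hu : ∀ i, u i ≠ 0) (b f : (i : Fin R) → Fin (M i) → ℂ) :
    SNRval R M σR2 σD2 u (fun i => rankOneBF (b i) (u i)) f = reducedSNR R M σR2 σD2 u b f := by
  simp only [SNRval, reducedSNR, sum_sum_mul_mul_eq_of_sum_mul_eq (sum_rankOneBF_mul (hu _) (b _)),
    sum_norm_sum_rankOneBF_mul_sq (hu _), add_comm σD2]

lemma SNRval_le_reducedSNR_compressBF (hσR : 0 ≤ σR2) (hσD : 0 < σD2) (hu : ∀ i, u i ≠ 0)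
    (B : (i : Fin R) → Matrix (Fin (M i)) (Fin (M i)) ℂ) (f : (i : Fin R) → Fin (M i) → ℂ) :
    SNRval R M σR2 σD2 u B f ≤
      reducedSNR R M σR2 σD2 u (fun i => compressBF (B i) (u i)) f := by
  simp only [SNRval, reducedSNR, add_comm σD2,
    sum_sum_mul_mul_eq_of_sum_mul_eq (sum_compressBF_mul (hu _) (B _))]
  gcongr with i
  exact norm_sum_mul_compressBF_sq_le (hu i) (B i) (f i)

variable (ftil : (i : Fin R) → Fin (M i) → ℂ) {ε : Fin R → ℝ}

lemma worstSNR_rankOneBF (hu : ∀ i, u i ≠ 0) (b : (i : Fin R) → Fin (M i) → ℂ) :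
    WorstSNR R M σR2 σD2 u ftil ε (fun i => rankOneBF (b i) (u i)) =
      RedWorst R M σR2 σD2 u ftil ε b := by
  simp only [WorstSNR, redWorst_eq_sInf_reducedSNR, SNRval_rankOneBF hu]

lemma worstSNR_le_redWorst_compressBF (hε : ∀ i, 0 ≤ ε i) (hσR : 0 ≤ σR2) (hσD : 0 < σD2)
    (hu : ∀ i, u i ≠ 0) (B : (i : Fin R) → Matrix (Fin (M i)) (Fin (M i)) ℂ) :
    WorstSNR R M σR2 σD2 u ftil ε B ≤
      RedWorst R M σR2 σD2 u ftil ε (fun i => compressBF (B i) (u i)) := by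
  refine sInf_setOf_le_sInf_setOf ⟨0, fun i => by simpa [vnorm2_zero] using hε i⟩ ⟨0, ?_⟩
    fun _ _ => SNRval_le_reducedSNR_compressBF hσR hσD hu B _
  rintro _ ⟨_, _, rfl⟩
  exact SNRval_nonneg hσR hσD.le B _

end Network

theorem stmt3_general (R : ℕ) (M : Fin R → ℕ)
    (u ftil : (i : Fin R) → Fin (M i) → ℂ) (ε : Fin R → ℝ) (hε : ∀ i, 0 ≤ ε i)
    (σR2 σD2 : ℝ) (hσR : 0 < σR2) (hσD : 0 < σD2)
    (P : Fin R → ℝ) (hP : ∀ i, 0 < P i)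
    (hu : ∀ i, u i ≠ 0) :
    (sSup {s : ℝ | ∃ B, FeasibleB R M σR2 P u B ∧
          s = WorstSNR R M σR2 σD2 u ftil ε B} =
      sSup {s : ℝ | ∃ b : (i : Fin R) → Fin (M i) → ℂ,
        (∀ i, vnorm2 (b i) ≤ Real.sqrt (P i / (σR2 + (vnorm2 (u i)) ^ 2))) ∧
        s = RedWorst R M σR2 σD2 u ftil ε b}) ∧
    (∀ b : (i : Fin R) → Fin (M i) → ℂ,
      (∀ i, vnorm2 (b i) ≤ Real.sqrt (P i / (σR2 + (vnorm2 (u i)) ^ 2))) →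
      FeasibleB R M σR2 P u (fun i => fun j k =>
          b i j * ((starRingEnd ℂ) (u i k) / (vnorm2 (u i) : ℂ))) ∧
      WorstSNR R M σR2 σD2 u ftil ε (fun i => fun j k =>
          b i j * ((starRingEnd ℂ) (u i k) / (vnorm2 (u i) : ℂ))) =
        RedWorst R M σR2 σD2 u ftil ε b) := by
  have hc : ∀ i, 0 < σR2 + vnorm2 (u i) ^ 2 := fun i => by positivity
  have rankOne (b : (i : Fin R) → Fin (M i) → ℂ)
      (hb : ∀ i, vnorm2 (b i) ≤ √(P i / (σR2 + vnorm2 (u i) ^ 2))) :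
      FeasibleB R M σR2 P u (fun i => rankOneBF (b i) (u i)) ∧
        WorstSNR R M σR2 σD2 u ftil ε (fun i => rankOneBF (b i) (u i)) =
          RedWorst R M σR2 σD2 u ftil ε b := by
    refine ⟨fun i => ?_, worstSNR_rankOneBF ftil hu b⟩
    rw [relayPower_rankOneBF (hu i)]
    exact (vnorm2_le_sqrt_div_iff (hP i).le (hc i)).1 (hb i)
  refine ⟨csSup_eq_csSup_of_forall_exists_le ?_ ?_, rankOne⟩
  · rintro _ ⟨B, hB, rfl⟩
    have hb i : vnorm2 (compressBF (B i) (u i)) ≤ √(P i / (σR2 + vnorm2 (u i) ^ 2)) :=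
      (vnorm2_le_sqrt_div_iff (hP i).le (hc i)).2
        ((relayPower_compressBF_le (hu i) hσR.le (B i)).trans (hB i))
    exact ⟨_, ⟨_, hb, rfl⟩, worstSNR_le_redWorst_compressBF ftil hε hσR.le hσD hu B⟩
  · rintro _ ⟨b, hb, rfl⟩
    exact ⟨_, ⟨_, (rankOne b hb).1, rfl⟩, (rankOne b hb).2.ge⟩

theorem stmt3 (R : ℕ) (hR : 1 ≤ R) (M : Fin R → ℕ)
    (u ftil : (i : Fin R) → Fin (M i) → ℂ) (ε : Fin R → ℝ) (hε : ∀ i, 0 ≤ ε i)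
    (σR2 σD2 : ℝ) (hσR : 0 < σR2) (hσD : 0 < σD2)
    (P : Fin R → ℝ) (hP : ∀ i, 0 < P i)
    (hu : ∀ i, u i ≠ 0) :
    (sSup {s : ℝ | ∃ B, FeasibleB R M σR2 P u B ∧
          s = WorstSNR R M σR2 σD2 u ftil ε B} =
      sSup {s : ℝ | ∃ b : (i : Fin R) → Fin (M i) → ℂ,
        (∀ i, vnorm2 (b i) ≤ Real.sqrt (P i / (σR2 + (vnorm2 (u i)) ^ 2))) ∧
        s = RedWorst R M σR2 σD2 u ftil ε b}) ∧
    (∀ b : (i : Fin R) → Fin (M i) → ℂ,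
      (∀ i, vnorm2 (b i) ≤ Real.sqrt (P i / (σR2 + (vnorm2 (u i)) ^ 2))) →
      FeasibleB R M σR2 P u (fun i => fun j k =>
          b i j * ((starRingEnd ℂ) (u i k) / (vnorm2 (u i) : ℂ))) ∧
      WorstSNR R M σR2 σD2 u ftil ε (fun i => fun j k =>
          b i j * ((starRingEnd ℂ) (u i k) / (vnorm2 (u i) : ℂ))) =
        RedWorst R M σR2 σD2 u ftil ε b) :=
  stmt3_general R M u ftil ε hε σR2 σD2 hσR hσD P hP hu
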